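/- Let X be an infinite Tychonoff space. The following are equivalent: (i) 𝒫_fin(X) is Gerlits-Nagy; (ii) X satisfies S_1(Ω_X, Ω_X^gp); (iii) every finite power Xⁿ (n ≥ 1, with the product topology) is Gerlits-Nagy; (iv) C_p(X) satisfies S_1(Ω_{C_p(X),𝟎}, Ω_{C_p(X),𝟎}^gp); (v) C_p(X) is Reznichenko and has countable strong fan-tightness. -/

import Mathlib

open Set TopologicalSpace

universe u

/-- A non-trivial open cover: a family of nonempty proper open sets covering `X`. -/
def NTOpenCover (X : Type u) [TopologicalSpace X] (𝒰 : Set (Set X)) : Prop :=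
  (∀ U ∈ 𝒰, IsOpen U ∧ U.Nonempty ∧ U ≠ Set.univ) ∧ ⋃₀ 𝒰 = Set.univ

/-- `𝒪_X`, the collection of non-trivial open covers of `X`. -/
def OX (X : Type u) [TopologicalSpace X] : Set (Set (Set X)) := {𝒰 | NTOpenCover X 𝒰}

/-- The Hurewicz property. -/
def HurewiczProp (X : Type u) [TopologicalSpace X] : Prop :=
  ∀ 𝒰 : ℕ → Set (Set X), (∀ n, 𝒰 n ∈ OX X) →
    ∃ ℱ : ℕ → Set (Set X), (∀ n, ℱ n ⊆ 𝒰 n ∧ (ℱ n).Finite) ∧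
      ∀ x : X, ∃ m : ℕ, ∀ n ≥ m, x ∈ ⋃₀ ℱ n

/-- The selection principle `S_fin(𝒜, ℬ)`. -/
def Sfin {α : Type u} (𝒜 ℬ : Set (Set α)) : Prop :=
  ∀ 𝒰 : ℕ → Set α, (∀ n, 𝒰 n ∈ 𝒜) →
    ∃ ℱ : ℕ → Set α, (∀ n, ℱ n ⊆ 𝒰 n ∧ (ℱ n).Finite) ∧ (⋃ n, ℱ n) ∈ ℬ

/-- The selection principle `S_1(𝒜, ℬ)`. -/
def Sone {α : Type u} (𝒜 ℬ : Set (Set α)) : Prop :=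
  ∀ 𝒰 : ℕ → Set α, (∀ n, 𝒰 n ∈ 𝒜) →
    ∃ f : ℕ → α, (∀ n, f n ∈ 𝒰 n) ∧ Set.range f ∈ ℬ

/-- A member `C` of a collection `ℭ` is groupable if there is a finite-to-one map
`φ : C → ℕ` such that for every infinite `J ⊆ ℕ`, `⋃ {φ⁻¹(n) : n ∈ J} ∈ ℭ`. -/
def Groupable {α : Type u} (ℭ : Set (Set α)) (C : Set α) : Prop :=
  ∃ φ : α → ℕ, (∀ n : ℕ, {x ∈ C | φ x = n}.Finite) ∧
    ∀ J : Set ℕ, J.Infinite → {x ∈ C | φ x ∈ J} ∈ ℭ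

/-- `ℭ^gp`, the collection of groupable members of `ℭ`. -/
def groupables {α : Type u} (ℭ : Set (Set α)) : Set (Set α) :=
  {C | C ∈ ℭ ∧ Groupable ℭ C}

/-- The Menger property. -/
def MengerProp (X : Type u) [TopologicalSpace X] : Prop := Sfin (OX X) (OX X)

/-- The Rothberger property. -/
def RothbergerProp (X : Type u) [TopologicalSpace X] : Prop := Sone (OX X) (OX X)

/-- The Gerlits-Nagy property: Hurewicz and Rothberger. -/
def GerlitsNagyProp (X : Type u) [TopologicalSpace X] : Prop :=
  HurewiczProp X ∧ RothbergerProp X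

/-- `𝒪_X(𝒜)`, the collection of `𝒜`-covers of `X`. -/
def ACovers (X : Type u) [TopologicalSpace X] (𝒜 : Set (Set X)) : Set (Set (Set X)) :=
  {𝒰 | 𝒰 ∈ OX X ∧ ∀ A ∈ 𝒜, ∃ U ∈ 𝒰, A ⊆ U}

/-- `𝒦_X`, the collection of `k`-covers of `X`. -/
def KCovers (X : Type u) [TopologicalSpace X] : Set (Set (Set X)) :=
  {𝒰 | 𝒰 ∈ OX X ∧ ∀ K : Set X, IsCompact K → K.Nonempty → ∃ U ∈ 𝒰, K ⊆ U}

/-- `Ω_X`, the collection of `ω`-covers of `X`. -/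
def OmegaCovers (X : Type u) [TopologicalSpace X] : Set (Set (Set X)) :=
  {𝒰 | 𝒰 ∈ OX X ∧ ∀ F : Set X, F.Finite → F.Nonempty → ∃ U ∈ 𝒰, F ⊆ U}

/-- An ideal of closed sets of `X`. -/
def IdealOfClosedSets (X : Type u) [TopologicalSpace X] (𝒜 : Set (Set X)) : Prop :=
  (∀ A ∈ 𝒜, IsClosed A ∧ A.Nonempty ∧ A ≠ Set.univ) ∧
  (∀ F : Set X, F.Finite → F.Nonempty → F ∈ 𝒜) ∧
  (∀ A B : Set X, A ∈ 𝒜 → B ∈ 𝒜 → A ∪ B ≠ Set.univ → A ∪ B ∈ 𝒜) ∧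
  (∀ A ∈ 𝒜, ∀ B : Set X, B ⊆ A → IsClosed B → B.Nonempty → B ∈ 𝒜)

/-- One has a winning strategy in the Hurewicz game on `X`. -/
def OneWinsHurewicz (X : Type u) [TopologicalSpace X] : Prop :=
  ∃ σ : List (Set (Set X)) → Set (Set X), (∀ s, σ s ∈ OX X) ∧
    ∀ F : ℕ → Set (Set X),
      (∀ n, (F n).Finite ∧ F n ⊆ σ (List.ofFn fun i : Fin n => F i)) →
        ∃ x : X, ∀ m : ℕ, ∃ n ≥ m, x ∉ ⋃₀ F n

/-- One has a winning strategy in `G_fin(𝒜, ℬ)`. -/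
def OneWinsGfin {α : Type u} (𝒜 ℬ : Set (Set α)) : Prop :=
  ∃ σ : List (Set α) → Set α, (∀ s, σ s ∈ 𝒜) ∧
    ∀ F : ℕ → Set α,
      (∀ n, (F n).Finite ∧ F n ⊆ σ (List.ofFn fun i : Fin n => F i)) →
        (⋃ n, F n) ∉ ℬ

/-- One has a winning predetermined strategy in `G_fin(𝒜, ℬ)`. -/
def OneWinsPreGfin {α : Type u} (𝒜 ℬ : Set (Set α)) : Prop :=
  ∃ σ : ℕ → Set α, (∀ n, σ n ∈ 𝒜) ∧
    ∀ F : ℕ → Set α, (∀ n, (F n).Finite ∧ F n ⊆ σ n) → (⋃ n, F n) ∉ ℬ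

/-- One has a winning strategy in `G_1(𝒜, ℬ)`. -/
def OneWinsGone {α : Type u} (𝒜 ℬ : Set (Set α)) : Prop :=
  ∃ σ : List α → Set α, (∀ s, σ s ∈ 𝒜) ∧
    ∀ f : ℕ → α, (∀ n, f n ∈ σ (List.ofFn fun i : Fin n => f i)) → Set.range f ∉ ℬ

/-- One has a winning predetermined strategy in `G_1(𝒜, ℬ)`. -/
def OneWinsPreGone {α : Type u} (𝒜 ℬ : Set (Set α)) : Prop :=
  ∃ σ : ℕ → Set α, (∀ n, σ n ∈ 𝒜) ∧
    ∀ f : ℕ → α, (∀ n, f n ∈ σ n) → Set.range f ∉ ℬ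

/-- The collection `𝒜` of subsets of `X`, viewed as a hyperspace with the Vietoris topology. -/
def Hyper (X : Type u) (𝒜 : Set (Set X)) : Type u := {K : Set X // K ∈ 𝒜}

/-- The Vietoris topology on `Hyper X 𝒜`. -/
instance Hyper.topologicalSpace (X : Type u) [TopologicalSpace X] (𝒜 : Set (Set X)) :
    TopologicalSpace (Hyper X 𝒜) :=
  TopologicalSpace.generateFrom
    {S | ∃ U : Set X, IsOpen U ∧
      (S = {K : Hyper X 𝒜 | K.1 ⊆ U} ∨ S = {K : Hyper X 𝒜 | (K.1 ∩ U).Nonempty})}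

/-- `𝕂(X)`: the nonempty compact subsets of `X` with the Vietoris topology. -/
abbrev HyperK (X : Type u) [TopologicalSpace X] : Type u :=
  Hyper X {K : Set X | IsCompact K ∧ K.Nonempty}

/-- `𝒫_fin(X)`: the nonempty finite subsets of `X` with the Vietoris topology. -/
abbrev PFin (X : Type u) : Type u :=
  Hyper X {F : Set X | F.Finite ∧ F.Nonempty}

/-- `C_p(X)`: continuous real-valued functions with the topology of pointwise convergence
(the subspace topology from the product topology on `X → ℝ`). -/
abbrev Cp (X : Type u) [TopologicalSpace X] : Type u := {f : X → ℝ // Continuous f}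

/-- `C_k(X)`: continuous real-valued functions with the compact-open topology. -/
def Ck (X : Type u) [TopologicalSpace X] : Type u := {f : X → ℝ // Continuous f}

instance Ck.topologicalSpace (X : Type u) [TopologicalSpace X] : TopologicalSpace (Ck X) :=
  TopologicalSpace.generateFrom
    {S | ∃ (K : Set X) (U : Set ℝ), IsCompact K ∧ IsOpen U ∧
      S = {f : Ck X | ∀ x ∈ K, f.1 x ∈ U}}

/-- The constantly zero function in `C_p(X)`. -/
def zeroCp (X : Type u) [TopologicalSpace X] : Cp X := ⟨fun _ => (0 : ℝ), continuous_const⟩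

/-- The constantly zero function in `C_k(X)`. -/
def zeroCk (X : Type u) [TopologicalSpace X] : Ck X := ⟨fun _ => (0 : ℝ), continuous_const⟩

/-- `Ω_{Y,y}`: the sets having `y` in their closure but not containing `y`. -/
def OmegaPt (Y : Type u) [TopologicalSpace Y] (y : Y) : Set (Set Y) :=
  {A | y ∈ closure A ∧ y ∉ A}

/-- Countable fan-tightness. -/
def CountableFanTightness (Y : Type u) [TopologicalSpace Y] : Prop :=
  ∀ y : Y, Sfin (OmegaPt Y y) (OmegaPt Y y)

/-- Countable strong fan-tightness. -/
def CountableStrongFanTightness (Y : Type u) [TopologicalSpace Y] : Prop :=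
  ∀ y : Y, Sone (OmegaPt Y y) (OmegaPt Y y)

/-- The Reznichenko property: every countable member of `Ω_{Y,y}` is groupable. -/
def Reznichenko (Y : Type u) [TopologicalSpace Y] : Prop :=
  ∀ y : Y, ∀ A ∈ OmegaPt Y y, A.Countable → Groupable (OmegaPt Y y) A

open Filter Topology

/-!
Everything is routed through two properties of `X`: `S₁(Ω, Ω)` and a Hurewicz-type selection
for `ω`-covers. Each of (i), (ii), (iv) yields both, because `ω`-covers of `X` become open covers
of `𝒫_fin(X)` under `U ↦ {K | K ⊆ U}`, and members of `Ω_{C_p(X), 0}` under `U ↦ {f | f = 1 off U}`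
(Urysohn functions vanishing on a finite set). Conversely, the two properties give `S₁(Ω, Ω)` and
the Hurewicz property of all finite powers (tube lemma), hence (iii), and (iii) gives (i) since
`𝒫_fin(X)` is a countable union of continuous images of the powers `X^(m+1)`. They also give (ii)
and (iv): the sets `{x | |f x| < 1/(n+1)}` turn members of `Ω_{C_p(X), 0}` into `ω`-covers, and a
countable `ω`-cover (or countable member of `Ω_{C_p(X), 0}`) is grouped by applying the Hurewicz
selection to the tails of an enumeration and cutting the selections into disjoint finite blocks.
Since `X` is infinite and `T₁`, deleting a point from each member of an open family that contains
every finite set in a member yields an `ω`-cover; this disposes of all degenerate cases where a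
member is the whole space. Finally (iv) ⟺ (v) because translations act transitively on `C_p(X)`.
-/

section Grouping

variable {α β : Type*}

lemma groupables_subset {ℭ : Set (Set α)} : groupables ℭ ⊆ ℭ := fun _ hC => hC.1

lemma Sone.mono {𝒜 ℬ ℬ' : Set (Set α)} (h : Sone 𝒜 ℬ) (hℬ : ℬ ⊆ ℬ') : Sone 𝒜 ℬ' :=
  fun 𝒰 h𝒰 => let ⟨f, hf, hr⟩ := h 𝒰 h𝒰; ⟨f, hf, hℬ hr⟩

lemma Sone.to_groupables {𝒜 ℬ : Set (Set α)} (h : Sone 𝒜 ℬ)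
    (hgp : ∀ C ∈ ℬ, C.Countable → Groupable ℬ C) : Sone 𝒜 (groupables ℬ) :=
  fun 𝒰 h𝒰 => let ⟨f, hf, hr⟩ := h 𝒰 h𝒰; ⟨f, hf, hr, hgp _ hr (countable_range f)⟩

lemma exists_selector_of_pair {𝒰 : ℕ → Set α} {g : ℕ → ℕ → α}
    (hg : ∀ k i, g k i ∈ 𝒰 (Nat.pair k i)) :
    ∃ f : ℕ → α, (∀ n, f n ∈ 𝒰 n) ∧ range f = ⋃ k, range (g k) := by
  refine ⟨fun n => g n.unpair.1 n.unpair.2, fun n => by simpa using hg n.unpair.1 n.unpair.2, ?_⟩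
  ext a
  simp only [mem_range, mem_iUnion]
  exact ⟨fun ⟨n, hn⟩ => ⟨_, _, hn⟩, fun ⟨k, i, hi⟩ => ⟨Nat.pair k i, by simpa using hi⟩⟩

lemma eventually_exists_mem_fiber {ℭ : Set (Set α)} {C : Set α} {φ : α → ℕ}
    (hJ : ∀ J : Set ℕ, J.Infinite → {x ∈ C | φ x ∈ J} ∈ ℭ) {P : α → Prop}
    (hP : ∀ D ∈ ℭ, ∃ V ∈ D, P V) :
    ∀ᶠ l in atTop, ∃ V ∈ C, φ V = l ∧ P V := by
  by_contra h
  obtain ⟨V, ⟨hVC, hVJ⟩, hPV⟩ :=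
    hP _ (hJ _ (Nat.frequently_atTop_iff_infinite.1 (not_eventually.1 h)))
  exact hVJ ⟨V, hVC, rfl, hPV⟩

lemma eventually_le_of_apply_eq (φ : α → ℕ) (W : ℕ → α) (j : ℕ) :
    ∀ᶠ l in atTop, ∀ n, φ (W n) = l → j ≤ n := by
  filter_upwards [(Finset.range j).eventually_all.2 fun i _ => eventually_ne_atTop (φ (W i))]
    with l hl n hn
  by_contra hnj
  exact hl n (Finset.mem_range.2 (not_le.1 hnj)) hn.symm

lemma exists_late_groups {ℭ : Set (Set α)} {W : ℕ → α} {φ : α → ℕ}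
    (hJ : ∀ J : Set ℕ, J.Infinite → {x ∈ range W | φ x ∈ J} ∈ ℭ) :
    ∃ l : ℕ → ℕ, (∀ j n, φ (W n) = l j → j ≤ n) ∧
      ∀ P : α → Prop, (∀ D ∈ ℭ, ∃ V ∈ D, P V) →
        ∀ᶠ j in atTop, ∃ n, φ (W n) = l j ∧ P (W n) := by
  choose N hN using fun j => eventually_atTop.1 (eventually_le_of_apply_eq φ W j)
  have hl : Tendsto (fun j => max j (N j)) atTop atTop :=
    tendsto_atTop_mono (fun j => le_max_left _ _) tendsto_id
  refine ⟨fun j => max j (N j), fun j n hn => hN j _ (le_max_right _ _) n hn, fun P hP => ?_⟩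
  filter_upwards [hl.eventually (eventually_exists_mem_fiber hJ hP)]
    with j ⟨_, ⟨n, rfl⟩, hn, hPn⟩
  exact ⟨n, hn, hPn⟩

lemma exists_strictMono_bound (M : ℕ → ℕ) : ∃ ν : ℕ → ℕ, StrictMono ν ∧ ∀ j, M (ν j) ≤ ν (j + 1) :=
  ⟨fun j => Nat.rec 0 (fun _ n => max (n + 1) (M n)) j,
    strictMono_nat_of_lt_succ fun _ => lt_max_of_lt_left (Nat.lt_succ_self _),
    fun _ => le_max_right _ _⟩

lemma groupable_of_blocks {ℭ : Set (Set α)} {κ : Type*} {P : κ → α → Prop} (e : ℕ → α)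
    (hℭ : ∀ S ⊆ range e, (∀ k, ∃ b ∈ S, P k b) → S ∈ ℭ)
    {ℬ : ℕ → Set α} (hfin : ∀ n, (ℬ n).Finite) (hsub : ∀ n, ℬ n ⊆ range e)
    (hlate : ∀ n, ∀ i ≤ n, e i ∉ ℬ n) (hev : ∀ k, ∀ᶠ n in atTop, ∃ b ∈ ℬ n, P k b) :
    Groupable ℭ (range e) := by
  classical
  let idx : α → ℕ := fun a => if h : ∃ i, e i = a then Nat.find h else 0
  have he_idx : ∀ a ∈ range e, e (idx a) = a := fun a h => by
    rw [show idx a = Nat.find h from dif_pos h]; exact Nat.find_spec h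
  have hlt : ∀ n, ∀ b ∈ ℬ n, n < idx b := fun n b hb =>
    not_le.1 fun h => hlate n _ h ((he_idx b (hsub n hb)).symm ▸ hb)
  choose M hM using fun n => ((hfin n).image idx).bddAbove
  obtain ⟨ν, hν, hνM⟩ := exists_strictMono_bound M
  have hblock : ∀ j, ∀ b ∈ ℬ (ν j), ν j < idx b ∧ idx b ≤ ν (j + 1) := fun j b hb =>
    ⟨hlt _ b hb, (hM _ (mem_image_of_mem idx hb)).trans (hνM j)⟩
  have hex : ∀ a, ∃ j, idx a ≤ ν (j + 1) := fun a =>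
    ⟨idx a, (Nat.le_succ _).trans (hν.id_le _)⟩
  let φ : α → ℕ := fun a => Nat.find (hex a)
  have hφ : ∀ j, ∀ b ∈ ℬ (ν j), φ b = j := fun j b hb => by
    refine (Nat.find_eq_iff _).2 ⟨(hblock j b hb).2, fun j' hj' h => ?_⟩
    have := hν.monotone (show j' + 1 ≤ j by omega)
    have := (hblock j b hb).1
    omega
  refine ⟨φ, fun j => ?_, fun J hJ => hℭ _ (sep_subset _ _) fun k => ?_⟩
  · refine ((finite_Iic (ν (j + 1))).image e).subset ?_
    rintro a ⟨ha, rfl⟩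
    exact ⟨idx a, Nat.find_spec (hex a), he_idx a ha⟩
  · obtain ⟨N, hN⟩ := eventually_atTop.1 (hev k)
    obtain ⟨j, hjJ, hjN⟩ := hJ.exists_gt N
    obtain ⟨b, hb, hPb⟩ := hN (ν j) (hjN.le.trans (hν.id_le j))
    exact ⟨b, ⟨hsub _ hb, (hφ j b hb).symm ▸ hjJ⟩, hPb⟩

lemma Groupable.of_subset {ℭ : Set (Set α)} {C A : Set α} (hC : Groupable ℭ C) (hCA : C ⊆ A)
    (hA : A.Countable) (hℭ : ∀ S T, S ∈ ℭ → S ⊆ T → T ⊆ A → T ∈ ℭ) : Groupable ℭ A := by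
  classical
  obtain ⟨φ, hfin, hJ⟩ := hC
  obtain ⟨enc, henc⟩ := hA.to_subtype.exists_injective_nat
  let ψ : α → ℕ := fun a => if a ∈ C then φ a else if h : a ∈ A then enc ⟨a, h⟩ else 0
  refine ⟨ψ, fun n => ?_, fun J hJinf => hℭ _ _ (hJ J hJinf) ?_ (sep_subset _ _)⟩
  · refine ((hfin n).union (((finite_singleton n).preimage henc.injOn).image Subtype.val)).subset ?_
    rintro a ⟨haA, rfl⟩
    by_cases haC : a ∈ C
    · exact Or.inl ⟨haC, by simp [ψ, haC]⟩
    · exact Or.inr ⟨⟨a, haA⟩, by simp [ψ, haC, haA], rfl⟩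
  · rintro a ⟨haC, haJ⟩
    exact ⟨hCA haC, by simpa [ψ, haC] using haJ⟩

lemma Groupable.image {ℭ : Set (Set α)} {ℭ' : Set (Set β)} {A : Set α} (hA : Groupable ℭ A)
    (g : α ≃ β) (hℭ : ∀ S ∈ ℭ, g '' S ∈ ℭ') : Groupable ℭ' (g '' A) := by
  obtain ⟨φ, hfin, hJ⟩ := hA
  have himage : ∀ p : ℕ → Prop, {b ∈ g '' A | p (φ (g.symm b))} = g '' {a ∈ A | p (φ a)} :=
    fun p => by ext b; simp [Equiv.image_eq_preimage_symm]
  exact ⟨φ ∘ g.symm, fun n => himage (· = n) ▸ (hfin n).image g,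
    fun J hJinf => himage (· ∈ J) ▸ hℭ _ (hJ J hJinf)⟩

end Grouping

section Punctured

variable {X : Type*}

/-- In a `T1Space`, removing a point from each member turns an open cover, or an open family
containing every finite set in a member, into a non-trivial one refining it. -/
def punctured (𝒰 : Set (Set X)) : Set (Set X) :=
  {V | V.Nonempty ∧ ∃ U ∈ 𝒰, ∃ z, V = U \ {z}}

lemma exists_superset_of_mem_punctured {𝒰 : Set (Set X)} {V : Set X} (hV : V ∈ punctured 𝒰) :
    ∃ U ∈ 𝒰, V ⊆ U := by
  obtain ⟨-, U, hU, z, rfl⟩ := hV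
  exact ⟨U, hU, sdiff_subset⟩

lemma exists_mem_punctured_superset {𝒰 : Set (Set X)} {U F : Set X} (hU : U ∈ 𝒰) (hFU : F ⊆ U)
    (hFne : F.Nonempty) {z : X} (hz : z ∉ F) : ∃ V ∈ punctured 𝒰, F ⊆ V :=
  ⟨U \ {z}, ⟨hFne.mono fun _ hx => ⟨hFU hx, fun h => hz (h ▸ hx)⟩, U, hU, z, rfl⟩,
    fun _ hx => ⟨hFU hx, fun h => hz (h ▸ hx)⟩⟩

end Punctured

section Covers

variable {X Y Z : Type*} [TopologicalSpace X] [TopologicalSpace Y] [TopologicalSpace Z]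

lemma mem_omegaCovers_iff {𝒰 : Set (Set X)} :
    𝒰 ∈ OmegaCovers X ↔ (∀ U ∈ 𝒰, IsOpen U ∧ U.Nonempty ∧ U ≠ univ) ∧
      ∀ F : Set X, F.Finite → F.Nonempty → ∃ U ∈ 𝒰, F ⊆ U := by
  refine ⟨fun h => ⟨h.1.1, h.2⟩, fun ⟨h𝒰, hw⟩ => ⟨⟨h𝒰, eq_univ_of_forall fun x => ?_⟩, hw⟩⟩
  obtain ⟨U, hU, hxU⟩ := hw {x} (finite_singleton x) (singleton_nonempty x)
  exact ⟨U, hU, hxU rfl⟩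

lemma diff_mem_omegaCovers {𝒰 𝒢 : Set (Set X)} (h𝒰 : 𝒰 ∈ OmegaCovers X) (h𝒢 : 𝒢.Finite) :
    𝒰 \ 𝒢 ∈ OmegaCovers X := by
  refine mem_omegaCovers_iff.2 ⟨fun U hU => h𝒰.1.1 U hU.1, fun F hF hFne => ?_⟩
  have : Nonempty X := ⟨hFne.some⟩
  choose! z hz using fun G (hG : G ∈ 𝒰) => nonempty_compl.2 (h𝒰.1.1 G hG).2.2
  -- a point outside each member of `𝒢` forces the chosen member out of `𝒢`
  obtain ⟨U, hU, hFU⟩ := h𝒰.2 (F ∪ z '' (𝒢 ∩ 𝒰))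
    (hF.union ((h𝒢.subset inter_subset_left).image z)) (hFne.mono subset_union_left)
  exact ⟨U, ⟨hU, fun hU𝒢 => hz U hU (hFU (Or.inr ⟨U, ⟨hU𝒢, hU⟩, rfl⟩))⟩,
    subset_union_left.trans hFU⟩

lemma frequently_subset_of_range_mem_omegaCovers {W : ℕ → Set X}
    (hW : range W ∈ OmegaCovers X) {F : Set X} (hF : F.Finite) (hFne : F.Nonempty) :
    ∃ᶠ n in atTop, F ⊆ W n := by
  refine frequently_atTop.2 fun N => ?_
  obtain ⟨_, ⟨⟨n, rfl⟩, hn⟩, hFn⟩ :=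
    (diff_mem_omegaCovers hW ((finite_Iio N).image W)).2 F hF hFne
  exact ⟨n, not_lt.1 fun h => hn ⟨n, h, rfl⟩, hFn⟩

lemma isOpen_of_mem_punctured [T1Space X] {𝒰 : Set (Set X)} (hopen : ∀ U ∈ 𝒰, IsOpen U)
    {V : Set X} (hV : V ∈ punctured 𝒰) : IsOpen V ∧ V.Nonempty ∧ V ≠ univ := by
  obtain ⟨hne, U, hU, z, rfl⟩ := hV
  exact ⟨(hopen U hU).sdiff isClosed_singleton, hne, ne_univ_iff_exists_notMem _ |>.2
    ⟨z, fun h => h.2 rfl⟩⟩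

lemma punctured_mem_OX [T1Space X] [Nontrivial X] {𝒰 : Set (Set X)}
    (hopen : ∀ U ∈ 𝒰, IsOpen U) (hcov : ⋃₀ 𝒰 = univ) : punctured 𝒰 ∈ OX X := by
  refine ⟨fun V hV => isOpen_of_mem_punctured hopen hV, eq_univ_of_forall fun x => ?_⟩
  obtain ⟨U, hU, hxU⟩ := hcov.symm ▸ mem_univ x
  obtain ⟨z, hz⟩ := exists_ne x
  obtain ⟨V, hV, hxV⟩ := exists_mem_punctured_superset hU (singleton_subset_iff.2 hxU)
    (singleton_nonempty x) (z := z) hz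
  exact ⟨V, hV, hxV rfl⟩

lemma punctured_mem_omegaCovers [T1Space X] [Infinite X] {𝒰 : Set (Set X)}
    (hopen : ∀ U ∈ 𝒰, IsOpen U) (hw : ∀ F : Set X, F.Finite → F.Nonempty → ∃ U ∈ 𝒰, F ⊆ U) :
    punctured 𝒰 ∈ OmegaCovers X := by
  refine mem_omegaCovers_iff.2 ⟨fun V hV => isOpen_of_mem_punctured hopen hV, fun F hF hFne => ?_⟩
  obtain ⟨U, hU, hFU⟩ := hw F hF hFne
  obtain ⟨z, hz⟩ := hF.exists_notMem
  exact exists_mem_punctured_superset hU hFU hFne hz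

lemma punctured_preimage_mem_OX [T1Space Y] [Nontrivial Y] {g : Y → Z} (hg : Continuous g)
    {𝒰 : Set (Set Z)} (hopen : ∀ U ∈ 𝒰, IsOpen U) (hcov : ⋃₀ 𝒰 = univ) :
    punctured (preimage g '' 𝒰) ∈ OX Y := by
  refine punctured_mem_OX (by rintro _ ⟨U, hU, rfl⟩; exact (hopen U hU).preimage hg) ?_
  rw [sUnion_image, ← preimage_iUnion₂, ← sUnion_eq_biUnion, hcov, preimage_univ]

lemma HurewiczProp.exists_finite_subsets_of_continuous [T1Space Y] [Nontrivial Y]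
    (hY : HurewiczProp Y) {g : Y → Z} (hg : Continuous g) {𝒰 : ℕ → Set (Set Z)}
    (hopen : ∀ n, ∀ U ∈ 𝒰 n, IsOpen U) (hcov : ∀ n, ⋃₀ 𝒰 n = univ) :
    ∃ ℱ : ℕ → Set (Set Z), (∀ n, ℱ n ⊆ 𝒰 n ∧ (ℱ n).Finite) ∧
      ∀ y, ∀ᶠ n in atTop, g y ∈ ⋃₀ ℱ n := by
  obtain ⟨ℱ, hℱ, hev⟩ := hY _ fun n => punctured_preimage_mem_OX hg (hopen n) (hcov n)
  choose! s hs hVs using fun n V (hV : V ∈ punctured (preimage g '' 𝒰 n)) =>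
    exists_mem_image.1 (exists_superset_of_mem_punctured hV)
  refine ⟨fun n => s n '' ℱ n, fun n => ⟨?_, (hℱ n).2.image _⟩, fun y => ?_⟩
  · rintro _ ⟨V, hV, rfl⟩
    exact hs n V ((hℱ n).1 hV)
  · filter_upwards [eventually_atTop.2 (hev y)] with n ⟨V, hV, hyV⟩
    exact ⟨s n V, mem_image_of_mem _ hV, hVs n V ((hℱ n).1 hV) hyV⟩

lemma RothbergerProp.exists_mem_of_continuous [T1Space Y] [Nontrivial Y]
    (hY : RothbergerProp Y) {g : Y → Z} (hg : Continuous g) {𝒰 : ℕ → Set (Set Z)}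
    (hopen : ∀ n, ∀ U ∈ 𝒰 n, IsOpen U) (hcov : ∀ n, ⋃₀ 𝒰 n = univ) :
    ∃ f : ℕ → Set Z, (∀ n, f n ∈ 𝒰 n) ∧ range g ⊆ ⋃ n, f n := by
  obtain ⟨v, hv, hvcov⟩ := hY _ fun n => punctured_preimage_mem_OX hg (hopen n) (hcov n)
  choose f hf hvf using fun n => exists_mem_image.1 (exists_superset_of_mem_punctured (hv n))
  refine ⟨f, hf, ?_⟩
  rintro _ ⟨y, rfl⟩
  obtain ⟨_, ⟨n, rfl⟩, hyn⟩ := hvcov.2.symm ▸ mem_univ y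
  exact mem_iUnion.2 ⟨n, hvf n hyn⟩

end Covers

def OmegaRothberger (X : Type*) [TopologicalSpace X] : Prop :=
  Sone (OmegaCovers X) (OmegaCovers X)

/-- The `j`-th finite selection may come from any later cover `𝒰 n`, `n ≥ j`: this is the form
in which the property comes out of a grouping. -/
def OmegaHurewicz (X : Type*) [TopologicalSpace X] : Prop :=
  ∀ 𝒰 : ℕ → Set (Set X), (∀ n, 𝒰 n ∈ OmegaCovers X) →
    ∃ ℋ : ℕ → Set (Set X), (∀ j, (ℋ j).Finite ∧ ∀ V ∈ ℋ j, ∃ n ≥ j, V ∈ 𝒰 n) ∧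
      ∀ F : Set X, F.Finite → F.Nonempty → ∀ᶠ j in atTop, ∃ V ∈ ℋ j, F ⊆ V

section Powers

variable {X : Type*} [TopologicalSpace X] {ι : Type*} [Finite ι]

lemma exists_isOpen_univ_pi_subset {F : Set X} (hF : F.Finite) {O : Set (ι → X)}
    (hO : IsOpen O) (hFO : univ.pi (fun _ => F) ⊆ O) :
    ∃ U, IsOpen U ∧ F ⊆ U ∧ univ.pi (fun _ => U) ⊆ O := by
  have hT : (univ.pi fun _ : ι => F).Finite := Finite.pi fun _ => hF
  choose! B hB hBO using fun p (hp : p ∈ univ.pi fun _ : ι => F) =>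
    isOpen_pi_iff'.1 hO p (hFO hp)
  -- around `x ∈ F`, intersect the sides at `x` of the boxes around the points of `F^ι`
  let N : X → Set X := fun x => ⋂ p ∈ univ.pi (fun _ : ι => F), ⋂ i, ⋂ (_ : p i = x), B p i
  have hN : ∀ x, IsOpen (N x) := fun x => hT.isOpen_biInter fun p hp =>
    isOpen_iInter_of_finite fun i => isOpen_iInter_of_finite fun _ => (hB p hp i).1
  have hxN : ∀ x, x ∈ N x := fun x => mem_iInter₂.2 fun p hp =>
    mem_iInter.2 fun i => mem_iInter.2 fun h => h ▸ (hB p hp i).2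
  refine ⟨⋃ x ∈ F, N x, isOpen_biUnion fun x _ => hN x, fun x hx => mem_biUnion hx (hxN x),
    fun y hy => ?_⟩
  choose x hxF hyx using fun i => mem_iUnion₂.1 (mem_univ_pi.1 hy i)
  have hx : x ∈ univ.pi fun _ => F := mem_univ_pi.2 hxF
  exact hBO x hx (mem_univ_pi.2 fun i =>
    mem_iInter.1 (mem_iInter.1 (mem_iInter₂.1 (hyx i) x hx) i) rfl)

lemma exists_isOpen_univ_pi_subset_sUnion {𝒱 : Set (Set (ι → X))}
    (hopen : ∀ V ∈ 𝒱, IsOpen V) (hcov : ⋃₀ 𝒱 = univ) {F : Set X} (hF : F.Finite) :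
    ∃ U, IsOpen U ∧ F ⊆ U ∧ ∃ 𝒢 ⊆ 𝒱, 𝒢.Finite ∧ univ.pi (fun _ => U) ⊆ ⋃₀ 𝒢 := by
  choose! V hV hpV using fun p : ι → X => hcov.symm ▸ mem_univ p
  have hT : (univ.pi fun _ : ι => F).Finite := Finite.pi fun _ => hF
  obtain ⟨U, hU, hFU, hUO⟩ := exists_isOpen_univ_pi_subset hF
    (isOpen_sUnion (s := V '' univ.pi fun _ => F) (by rintro _ ⟨p, -, rfl⟩; exact hopen _ (hV p)))
    fun p hp => ⟨V p, mem_image_of_mem V hp, hpV p⟩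
  exact ⟨U, hU, hFU, _, image_subset_iff.2 fun p _ => hV p, hT.image V, hUO⟩

lemma OmegaRothberger.pi [Nonempty ι] (hX : OmegaRothberger X) : OmegaRothberger (ι → X) := by
  intro 𝒲 h𝒲
  let 𝒰 : ℕ → Set (Set X) := fun n =>
    {U | IsOpen U ∧ U.Nonempty ∧ ∃ W ∈ 𝒲 n, univ.pi (fun _ : ι => U) ⊆ W}
  have h𝒰 : ∀ n, 𝒰 n ∈ OmegaCovers X := fun n => by
    refine mem_omegaCovers_iff.2 ⟨?_, fun F hF hFne => ?_⟩
    · rintro U ⟨hU, hUne, W, hW, hUW⟩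
      refine ⟨hU, hUne, fun hUuniv => ((h𝒲 n).1.1 W hW).2.2 (univ_subset_iff.1 ?_)⟩
      simpa [hUuniv] using hUW
    · obtain ⟨W, hW, hFW⟩ := (h𝒲 n).2 _ (Finite.pi fun _ => hF)
        (univ_pi_nonempty_iff.2 fun _ => hFne)
      obtain ⟨U, hU, hFU, hUW⟩ := exists_isOpen_univ_pi_subset hF ((h𝒲 n).1.1 W hW).1 hFW
      exact ⟨U, ⟨hU, hFne.mono hFU, W, hW, hUW⟩, hFU⟩
  obtain ⟨v, hv, hvΩ⟩ := hX 𝒰 h𝒰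
  choose W hW hvW using fun n => (hv n).2.2
  refine ⟨W, hW, mem_omegaCovers_iff.2
    ⟨by rintro _ ⟨n, rfl⟩; exact (h𝒲 n).1.1 _ (hW n), fun G hG hGne => ?_⟩⟩
  obtain ⟨y₀, hy₀⟩ := hGne
  obtain ⟨_, ⟨n, rfl⟩, hn⟩ := hvΩ.2 (⋃ y ∈ G, range y) (hG.biUnion fun y _ => finite_range y)
    ⟨y₀ (Classical.arbitrary ι), mem_biUnion hy₀ (mem_range_self _)⟩
  exact ⟨W n, mem_range_self n, fun y hy =>
    hvW n (mem_univ_pi.2 fun i => hn (mem_biUnion hy (mem_range_self i)))⟩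

end Powers

section Selection

variable {X : Type*} [TopologicalSpace X]

lemma OmegaRothberger.rothbergerProp [T1Space X] [Infinite X] (hX : OmegaRothberger X) :
    RothbergerProp X := by
  intro 𝒱 h𝒱
  -- one finite union per block `𝒱 (Nat.pair k ·)`, using distinct covers of the block, unfolds
  -- into a single selection
  let 𝒲 : ℕ → Set (Set X) := fun k =>
    {W | ∃ r, ∃ g : Fin r → Set X, (∀ i : Fin r, g i ∈ 𝒱 (Nat.pair k i)) ∧ W = ⋃ i, g i}
  have h𝒲 : ∀ k, punctured (𝒲 k) ∈ OmegaCovers X := fun k => by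
    refine punctured_mem_omegaCovers
      (by rintro _ ⟨r, g, hg, rfl⟩; exact isOpen_iUnion fun i => ((h𝒱 _).1 _ (hg i)).1)
      fun F hF _ => ?_
    obtain ⟨r, e, -, rfl⟩ := hF.fin_param
    choose g hg hxg using fun i : Fin r => (h𝒱 (Nat.pair k i)).2.symm ▸ mem_univ (e i)
    exact ⟨⋃ i, g i, ⟨r, g, hg, rfl⟩, range_subset_iff.2 fun i => mem_iUnion.2 ⟨i, hxg i⟩⟩
  obtain ⟨w, hw, hwΩ⟩ := hX _ h𝒲
  choose W hW hwW using fun k => exists_superset_of_mem_punctured (hw k)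
  choose r g hg hWg using hW
  choose V₀ hV₀ using fun n => Nonempty.of_sUnion ((h𝒱 n).2 ▸ univ_nonempty)
  obtain ⟨f, hf, hrange⟩ := exists_selector_of_pair (𝒰 := 𝒱)
    (g := fun k i => if h : i < r k then g k ⟨i, h⟩ else V₀ (Nat.pair k i))
    fun k i => by split_ifs with h; exacts [hg k ⟨i, h⟩, hV₀ _]
  refine ⟨f, hf, by rintro _ ⟨n, rfl⟩; exact (h𝒱 n).1 _ (hf n), eq_univ_of_forall fun x => ?_⟩
  obtain ⟨_, ⟨k, rfl⟩, hxk⟩ := hwΩ.1.2.symm ▸ mem_univ x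
  obtain ⟨i, hi⟩ := mem_iUnion.1 (hWg k ▸ hwW k hxk)
  exact ⟨g k i, hrange ▸ mem_iUnion.2 ⟨k, i, dif_pos i.2⟩, hi⟩

lemma OmegaHurewicz.hurewiczProp_pi [T1Space X] [Infinite X] {ι : Type*} [Finite ι]
    (hX : OmegaHurewicz X) : HurewiczProp (ι → X) := by
  intro 𝒱 h𝒱
  let 𝒰 : ℕ → Set (Set X) := fun n => {U | IsOpen U ∧
    ∀ k ≤ n, ∃ 𝒢 ⊆ 𝒱 k, 𝒢.Finite ∧ univ.pi (fun _ : ι => U) ⊆ ⋃₀ 𝒢}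
  have h𝒰 : ∀ n, punctured (𝒰 n) ∈ OmegaCovers X := fun n => by
    refine punctured_mem_omegaCovers (fun U hU => hU.1) fun F hF _ => ?_
    choose U hU hFU 𝒢 h𝒢 h𝒢fin hU𝒢 using fun k =>
      exists_isOpen_univ_pi_subset_sUnion (fun V hV => ((h𝒱 k).1 V hV).1) (h𝒱 k).2 hF
    refine ⟨⋂ k ∈ Iic n, U k, ⟨(finite_Iic n).isOpen_biInter fun k _ => hU k, fun k hk =>
      ⟨𝒢 k, h𝒢 k, h𝒢fin k,
        (pi_mono fun _ _ => biInter_subset_of_mem (mem_Iic.2 hk)).trans (hU𝒢 k)⟩⟩,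
      subset_iInter₂ fun k _ => hFU k⟩
  obtain ⟨ℋ, hℋ, hev⟩ := hX _ h𝒰
  have hℋ𝒢 : ∀ j, ∀ V ∈ ℋ j, ∃ 𝒢 ⊆ 𝒱 j, 𝒢.Finite ∧ univ.pi (fun _ : ι => V) ⊆ ⋃₀ 𝒢 :=
    fun j V hV => by
      obtain ⟨n, hjn, hVn⟩ := (hℋ j).2 V hV
      obtain ⟨U, ⟨-, hU⟩, hVU⟩ := exists_superset_of_mem_punctured hVn
      obtain ⟨𝒢, h𝒢, h𝒢fin, hU𝒢⟩ := hU j hjn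
      exact ⟨𝒢, h𝒢, h𝒢fin, (pi_mono fun _ _ => hVU).trans hU𝒢⟩
  choose! 𝒢 h𝒢 h𝒢fin hV𝒢 using hℋ𝒢
  refine ⟨fun j => ⋃ V ∈ ℋ j, 𝒢 j V, fun j => ⟨iUnion₂_subset fun V hV => h𝒢 j V hV,
    (hℋ j).1.biUnion fun V hV => h𝒢fin j V hV⟩, fun y => eventually_atTop.1 ?_⟩
  filter_upwards [hev _ ((finite_range y).insert (Classical.arbitrary X)) (insert_nonempty _ _)]
    with j ⟨V, hV, hyV⟩
  obtain ⟨G, hG, hyG⟩ := hV𝒢 j V hV (mem_univ_pi.2 fun i => hyV (mem_insert_of_mem _ ⟨i, rfl⟩))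
  exact ⟨G, mem_biUnion hV hG, hyG⟩

lemma OmegaHurewicz.of_sone_groupables
    (h : Sone (OmegaCovers X) (groupables (OmegaCovers X))) : OmegaHurewicz X := by
  intro 𝒰 h𝒰
  obtain ⟨f, hf, -, φ, hfin, hJ⟩ := h 𝒰 h𝒰
  obtain ⟨l, hl, hev⟩ := exists_late_groups hJ
  refine ⟨fun j => {V ∈ range f | φ V = l j}, fun j => ⟨hfin (l j), ?_⟩, fun F hF hFne => ?_⟩
  · rintro _ ⟨⟨n, rfl⟩, hn⟩
    exact ⟨n, hl j n hn, hf n⟩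
  · filter_upwards [hev (F ⊆ ·) fun D hD => hD.2 F hF hFne] with j ⟨n, hn, hFn⟩
    exact ⟨f n, ⟨mem_range_self n, hn⟩, hFn⟩

lemma OmegaHurewicz.groupable [Nonempty X] (hX : OmegaHurewicz X) {C : Set (Set X)}
    (hC : C ∈ OmegaCovers X) (hc : C.Countable) : Groupable (OmegaCovers X) C := by
  obtain ⟨U₀, hU₀, -⟩ := hC.2 _ (finite_singleton (Classical.arbitrary X)) (singleton_nonempty _)
  obtain ⟨e, rfl⟩ := hc.exists_eq_range ⟨U₀, hU₀⟩
  obtain ⟨ℋ, hℋ, hev⟩ := hX (fun n => range e \ e '' Iic n)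
    fun n => diff_mem_omegaCovers hC ((finite_Iic n).image e)
  refine groupable_of_blocks (P := fun (F : {F : Set X // F.Finite ∧ F.Nonempty}) V => F.1 ⊆ V) e
    (fun S hS hw => mem_omegaCovers_iff.2 ⟨fun U hU => hC.1.1 U (hS hU),
      fun F hF hFne => hw ⟨F, hF, hFne⟩⟩) (fun n => (hℋ n).1) (fun n V hV => ?_)
    (fun n i hi hin => ?_) fun F => hev F.1 F.2.1 F.2.2
  · obtain ⟨m, -, hVm⟩ := (hℋ n).2 V hV
    exact hVm.1
  · obtain ⟨m, hnm, hVm⟩ := (hℋ n).2 _ hin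
    exact hVm.2 ⟨i, hi.trans hnm, rfl⟩

end Selection

section Hyperspace

variable {X : Type*}

def PFin.subsets (U : Set X) : Set (PFin X) := {K | K.1 ⊆ U}

lemma PFin.subsets_injective : Function.Injective (PFin.subsets (X := X)) := fun U V h => by
  ext x
  have : ({x} : Set X) ⊆ U ↔ {x} ⊆ V := Iff.of_eq
    (congrArg (fun 𝒮 => (⟨{x}, finite_singleton x, singleton_nonempty x⟩ : PFin X) ∈ 𝒮) h)
  simpa only [singleton_subset_iff] using this

def PFin.ofFun {ι : Type*} [Nonempty ι] [Finite ι] (y : ι → X) : PFin X :=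
  ⟨range y, finite_range y, range_nonempty y⟩

lemma PFin.exists_ofFun_eq (K : PFin X) : ∃ m, ∃ y : Fin (m + 1) → X, PFin.ofFun y = K := by
  obtain ⟨K, hK, hKne⟩ := K
  obtain ⟨_ | m, y, -, rfl⟩ := hK.fin_param
  · simp at hKne
  · exact ⟨m, y, rfl⟩

variable [TopologicalSpace X]

lemma PFin.isOpen_subsets {U : Set X} (hU : IsOpen U) : IsOpen (PFin.subsets U) :=
  isOpen_generateFrom_of_mem ⟨U, hU, Or.inl rfl⟩

lemma PFin.image_subsets_mem_OX {𝒰 : Set (Set X)} (h𝒰 : 𝒰 ∈ OmegaCovers X) :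
    PFin.subsets '' 𝒰 ∈ OX (PFin X) := by
  refine ⟨?_, eq_univ_of_forall fun K => ?_⟩
  · rintro _ ⟨U, hU, rfl⟩
    obtain ⟨hUo, ⟨x, hx⟩, hUne⟩ := h𝒰.1.1 U hU
    obtain ⟨z, hz⟩ := (ne_univ_iff_exists_notMem U).1 hUne
    refine ⟨PFin.isOpen_subsets hUo, ⟨⟨{x}, finite_singleton x, singleton_nonempty x⟩,
      singleton_subset_iff.2 hx⟩, (ne_univ_iff_exists_notMem _).2
        ⟨⟨{z}, finite_singleton z, singleton_nonempty z⟩, fun h => hz (h rfl)⟩⟩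
  · obtain ⟨U, hU, hKU⟩ := h𝒰.2 K.1 K.2.1 K.2.2
    exact ⟨PFin.subsets U, mem_image_of_mem _ hU, hKU⟩

lemma OmegaRothberger.of_rothbergerProp_pfin (h : RothbergerProp (PFin X)) :
    OmegaRothberger X := by
  intro 𝒰 h𝒰
  obtain ⟨f, hf, hcov⟩ := h _ fun n => PFin.image_subsets_mem_OX (h𝒰 n)
  choose v hv hvf using hf
  refine ⟨v, hv, mem_omegaCovers_iff.2
    ⟨by rintro _ ⟨n, rfl⟩; exact (h𝒰 n).1.1 _ (hv n), fun F hF hFne => ?_⟩⟩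
  obtain ⟨_, ⟨n, rfl⟩, hFn⟩ :=
    hcov.2.symm ▸ mem_univ (⟨F, hF, hFne⟩ : PFin X)
  rw [← hvf n] at hFn
  exact ⟨v n, mem_range_self n, hFn⟩

lemma OmegaHurewicz.of_hurewiczProp_pfin (h : HurewiczProp (PFin X)) : OmegaHurewicz X := by
  intro 𝒰 h𝒰
  obtain ⟨ℱ, hℱ, hev⟩ := h _ fun n => PFin.image_subsets_mem_OX (h𝒰 n)
  refine ⟨fun j => PFin.subsets ⁻¹' ℱ j, fun j => ⟨(hℱ j).2.preimage
    PFin.subsets_injective.injOn, fun V hV => ⟨j, le_rfl,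
      PFin.subsets_injective.mem_set_image.1 ((hℱ j).1 hV)⟩⟩, fun F hF hFne => ?_⟩
  filter_upwards [eventually_atTop.2 (hev ⟨F, hF, hFne⟩)] with j ⟨_, hS, hFS⟩
  obtain ⟨U, -, rfl⟩ := (hℱ j).1 hS
  exact ⟨U, hS, hFS⟩

lemma PFin.continuous_ofFun {ι : Type*} [Nonempty ι] [Finite ι] :
    Continuous (PFin.ofFun : (ι → X) → PFin X) := by
  refine continuous_generateFrom_iff.2 ?_
  rintro _ ⟨U, hU, rfl | rfl⟩
  · have : PFin.ofFun ⁻¹' {K : PFin X | K.1 ⊆ U} = univ.pi fun _ : ι => U := by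
      ext y; simp [PFin.ofFun, range_subset_iff]
    exact this ▸ isOpen_set_pi finite_univ fun _ _ => hU
  · have : PFin.ofFun ⁻¹' {K : PFin X | (K.1 ∩ U).Nonempty} = ⋃ i : ι, (fun y => y i) ⁻¹' U := by
      ext y; simp [PFin.ofFun, Set.Nonempty]
    exact this ▸ isOpen_iUnion fun i => hU.preimage (continuous_apply i)

lemma gerlitsNagyProp_pfin [T1Space X] [Infinite X]
    (h : ∀ m, GerlitsNagyProp (Fin (m + 1) → X)) : GerlitsNagyProp (PFin X) := by
  constructor
  · intro 𝒰 h𝒰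
    choose ℱ hℱ hev using fun m => (h m).1.exists_finite_subsets_of_continuous
      PFin.continuous_ofFun (fun n U hU => ((h𝒰 n).1 U hU).1) fun n => (h𝒰 n).2
    refine ⟨fun n => ⋃ m ∈ Iic n, ℱ m n, fun n => ⟨iUnion₂_subset fun m _ => (hℱ m n).1,
      (finite_Iic n).biUnion fun m _ => (hℱ m n).2⟩, fun K => ?_⟩
    obtain ⟨m, y, rfl⟩ := PFin.exists_ofFun_eq K
    refine eventually_atTop.1 ?_
    filter_upwards [hev m y, eventually_ge_atTop m] with n ⟨U, hU, hyU⟩ hmn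
    exact ⟨U, mem_biUnion (mem_Iic.2 hmn) hU, hyU⟩
  · intro 𝒰 h𝒰
    choose v hv hvcov using fun m => (h m).2.exists_mem_of_continuous PFin.continuous_ofFun
      (𝒰 := fun i => 𝒰 (Nat.pair m i)) (fun i U hU => ((h𝒰 _).1 U hU).1) fun i => (h𝒰 _).2
    obtain ⟨f, hf, hrange⟩ := exists_selector_of_pair hv
    refine ⟨f, hf, ⟨by rintro _ ⟨n, rfl⟩; exact (h𝒰 n).1 _ (hf n), eq_univ_of_forall fun K => ?_⟩⟩
    obtain ⟨m, y, rfl⟩ := PFin.exists_ofFun_eq K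
    obtain ⟨i, hi⟩ := mem_iUnion.1 (hvcov m (mem_range_self y))
    exact ⟨v m i, hrange ▸ mem_iUnion.2 ⟨m, i, rfl⟩, hi⟩

end Hyperspace

section PointCovers

variable {Y Z : Type*} [TopologicalSpace Y] [TopologicalSpace Z]

lemma diff_mem_omegaPt [T1Space Y] {y : Y} {A P : Set Y} (hA : A ∈ OmegaPt Y y) (hP : P.Finite) :
    A \ P ∈ OmegaPt Y y := by
  refine ⟨?_, fun h => hA.2 h.1⟩
  have hsub : A ⊆ (A \ P) ∪ (P \ {y}) := fun a ha => by
    by_cases haP : a ∈ P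
    exacts [Or.inr ⟨haP, fun h => hA.2 (h ▸ ha)⟩, Or.inl ⟨ha, haP⟩]
  have := closure_mono hsub hA.1
  rw [closure_union, (hP.sdiff (t := {y})).isClosed.closure_eq] at this
  exact this.resolve_right fun h => h.2 rfl

lemma image_mem_omegaPt_iff (T : Y ≃ₜ Z) {y : Y} {A : Set Y} :
    T '' A ∈ OmegaPt Z (T y) ↔ A ∈ OmegaPt Y y := by
  simp only [OmegaPt, mem_ofPred_eq, ← T.image_closure, T.injective.mem_set_image]

lemma Sone.omegaPt_groupables_homeomorph (T : Y ≃ₜ Z) {y : Y}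
    (h : Sone (OmegaPt Y y) (groupables (OmegaPt Y y))) :
    Sone (OmegaPt Z (T y)) (groupables (OmegaPt Z (T y))) := by
  intro A hA
  have hA' : ∀ n, T ⁻¹' A n ∈ OmegaPt Y y := fun n => by
    simpa only [T.symm_apply_apply, T.image_symm] using
      (image_mem_omegaPt_iff T.symm (y := T y)).2 (hA n)
  obtain ⟨f, hf, hr, hgp⟩ := h _ hA'
  refine ⟨T ∘ f, hf, ?_⟩
  rw [range_comp]
  exact ⟨(image_mem_omegaPt_iff T).2 hr,
    hgp.image T.toEquiv fun S hS => (image_mem_omegaPt_iff T).2 hS⟩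

lemma reznichenko_and_countableStrongFanTightness
    (h : ∀ y : Y, Sone (OmegaPt Y y) (groupables (OmegaPt Y y))) :
    Reznichenko Y ∧ CountableStrongFanTightness Y := by
  refine ⟨fun y A hA hc => ?_, fun y => (h y).mono groupables_subset⟩
  obtain ⟨f, hf, -, hgp⟩ := h y (fun _ => A) fun _ => hA
  exact hgp.of_subset (range_subset_iff.2 hf) hc
    fun S T hS hST hTA => ⟨closure_mono hST hS.1, fun hy => hA.2 (hTA hy)⟩

end PointCovers

section Cp

variable {X : Type*} [TopologicalSpace X]

lemma hasBasis_nhds_zeroCp : (𝓝 (zeroCp X)).HasBasis (fun p : Set X × ℝ => p.1.Finite ∧ 0 < p.2)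
    fun p => {g : Cp X | ∀ x ∈ p.1, |g.1 x| < p.2} := by
  have := ((Metric.nhds_basis_ball (x := (0 : ℝ))).pi_self (ι := X)).comap
    (Subtype.val : Cp X → X → ℝ)
  rw [← nhds_pi] at this
  convert this using 2 with p
  · exact nhds_induced Subtype.val (zeroCp X)
  ext g
  simp

lemma isOpen_setOf_abs_lt (g : Cp X) (c : ℝ) : IsOpen {x | |g.1 x| < c} :=
  isOpen_lt (continuous_abs.comp g.2) continuous_const

lemma zeroCp_mem_closure_iff {A : Set (Cp X)} : zeroCp X ∈ closure A ↔
    ∀ F : Set X, F.Finite → ∀ ε > 0, ∃ g ∈ A, ∀ x ∈ F, |g.1 x| < ε := by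
  rw [mem_closure_iff_nhds_basis hasBasis_nhds_zeroCp]
  exact ⟨fun h F hF ε hε => h (F, ε) ⟨hF, hε⟩, fun h p hp => h p.1 hp.1 p.2 hp.2⟩

def Cp.translate (y : Cp X) : Cp X ≃ₜ Cp X :=
  (Homeomorph.addRight y.1).subtype fun g =>
    ⟨fun hg => hg.add y.2, fun hg => by simpa using hg.sub y.2⟩

lemma Cp.translate_zeroCp (y : Cp X) : Cp.translate y (zeroCp X) = y :=
  Subtype.ext (zero_add y.1)

lemma exists_continuous_zero_on_one_off [CompletelyRegularSpace X] {F U : Set X} (hF : F.Finite)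
    (hU : IsOpen U) (hFU : F ⊆ U) :
    ∃ f : X → ℝ, Continuous f ∧ (∀ x ∈ F, f x = 0) ∧ ∀ x ∉ U, f x = 1 := by
  choose! f hf hfx hfU using fun x (hx : x ∈ F) =>
    CompletelyRegularSpace.completely_regular x Uᶜ hU.isClosed_compl (not_not.2 (hFU hx))
  refine ⟨fun z => ∏ x ∈ hF.toFinset, (f x z : ℝ),
    continuous_finsetProd _ fun x hx => continuous_subtype_val.comp (hf x (hF.mem_toFinset.1 hx)),
    fun x hx => Finset.prod_eq_zero (hF.mem_toFinset.2 hx) (by simp [hfx x hx]),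
    fun z hz => Finset.prod_eq_one fun x hx => ?_⟩
  simp [hfU x (hF.mem_toFinset.1 hx) hz]

def Cp.oneOutside (𝒰 : Set (Set X)) : Set (Cp X) := {g | ∃ U ∈ 𝒰, ∀ x ∉ U, g.1 x = 1}

lemma Cp.oneOutside_mem_omegaPt [CompletelyRegularSpace X] [Nonempty X] {𝒰 : Set (Set X)}
    (h𝒰 : 𝒰 ∈ OmegaCovers X) : Cp.oneOutside 𝒰 ∈ OmegaPt (Cp X) (zeroCp X) := by
  refine ⟨zeroCp_mem_closure_iff.2 fun F hF ε hε => ?_, fun ⟨U, hU, hU1⟩ => ?_⟩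
  · obtain ⟨U, hU, hFU⟩ := h𝒰.2 _ (hF.insert (Classical.arbitrary X)) (insert_nonempty _ _)
    obtain ⟨f, hf, hf0, hf1⟩ := exists_continuous_zero_on_one_off (hF.insert _)
      (h𝒰.1.1 U hU).1 hFU
    exact ⟨⟨f, hf⟩, ⟨U, hU, hf1⟩, fun x hx => by simpa [hf0 x (mem_insert_of_mem _ hx)] using hε⟩
  · obtain ⟨x, hx⟩ := (ne_univ_iff_exists_notMem U).1 (h𝒰.1.1 U hU).2.2
    simpa [zeroCp] using hU1 x hx

lemma subset_of_abs_lt_one {g : Cp X} {U F : Set X} (hgU : ∀ x ∉ U, g.1 x = 1)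
    (hgF : ∀ x ∈ F, |g.1 x| < 1) : F ⊆ U := fun x hx =>
  by_contra fun hxU => by simpa [hgU x hxU] using hgF x hx

lemma OmegaRothberger.of_sone_omegaPt_zeroCp [CompletelyRegularSpace X] [Nonempty X]
    (h : Sone (OmegaPt (Cp X) (zeroCp X)) (OmegaPt (Cp X) (zeroCp X))) : OmegaRothberger X := by
  intro 𝒰 h𝒰
  obtain ⟨f, hf, hr⟩ := h _ fun n => Cp.oneOutside_mem_omegaPt (h𝒰 n)
  choose u hu hfu using hf
  refine ⟨u, hu, mem_omegaCovers_iff.2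
    ⟨by rintro _ ⟨n, rfl⟩; exact (h𝒰 n).1.1 _ (hu n), fun F hF _ => ?_⟩⟩
  obtain ⟨_, ⟨n, rfl⟩, hn⟩ := zeroCp_mem_closure_iff.1 hr.1 F hF 1 one_pos
  exact ⟨u n, mem_range_self n, subset_of_abs_lt_one (hfu n) hn⟩

lemma OmegaHurewicz.of_sone_omegaPt_zeroCp_groupables [CompletelyRegularSpace X] [Nonempty X]
    (h : Sone (OmegaPt (Cp X) (zeroCp X)) (groupables (OmegaPt (Cp X) (zeroCp X)))) :
    OmegaHurewicz X := by
  intro 𝒰 h𝒰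
  obtain ⟨f, hf, -, φ, hfin, hJ⟩ := h _ fun n => Cp.oneOutside_mem_omegaPt (h𝒰 n)
  choose u hu hfu using hf
  obtain ⟨l, hl, hev⟩ := exists_late_groups hJ
  have hinv : ∀ n, f (Function.invFun f (f n)) = f n := fun n => Function.invFun_eq ⟨n, rfl⟩
  -- a member of a group may be `f n` for infinitely many `n`; one index per member suffices
  refine ⟨fun j => (u ∘ Function.invFun f) '' {g ∈ range f | φ g = l j},
    fun j => ⟨(hfin _).image _, ?_⟩, fun F hF _ => ?_⟩
  · rintro _ ⟨_, ⟨⟨n, rfl⟩, hn⟩, rfl⟩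
    exact ⟨_, hl j _ ((hinv n).symm ▸ hn), hu _⟩
  · filter_upwards [hev (fun g => ∀ x ∈ F, |g.1 x| < 1)
      fun D hD => zeroCp_mem_closure_iff.1 hD.1 F hF 1 one_pos] with j ⟨n, hn, hFn⟩
    exact ⟨_, ⟨f n, ⟨mem_range_self n, hn⟩, rfl⟩,
      subset_of_abs_lt_one (hfu _) ((hinv n).symm ▸ hFn)⟩

lemma punctured_image_sublevel_mem_omegaCovers [T1Space X] [Infinite X] {A : Set (Cp X)}
    (hA : zeroCp X ∈ closure A) {ε : ℝ} (hε : 0 < ε) :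
    punctured ((fun g : Cp X => {x | |g.1 x| < ε}) '' A) ∈ OmegaCovers X := by
  refine punctured_mem_omegaCovers (by rintro _ ⟨g, -, rfl⟩; exact isOpen_setOf_abs_lt g ε)
    fun F hF _ => ?_
  obtain ⟨g, hg, hgF⟩ := zeroCp_mem_closure_iff.1 hA F hF ε hε
  exact ⟨_, mem_image_of_mem _ hg, hgF⟩

lemma OmegaRothberger.sone_omegaPt_zeroCp [T1Space X] [Infinite X] (hX : OmegaRothberger X) :
    Sone (OmegaPt (Cp X) (zeroCp X)) (OmegaPt (Cp X) (zeroCp X)) := by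
  intro A hA
  obtain ⟨W, hW, hWΩ⟩ := hX _ fun n =>
    punctured_image_sublevel_mem_omegaCovers (hA n).1 (Nat.one_div_pos_of_nat (n := n))
  choose g hg hWg using fun n => exists_mem_image.1 (exists_superset_of_mem_punctured (hW n))
  refine ⟨g, hg, zeroCp_mem_closure_iff.2 fun F hF ε hε => ?_,
    fun ⟨n, hn⟩ => (hA n).2 (hn ▸ hg n)⟩
  -- some `W n ⊇ F` has `1 / (n + 1) < ε`, since `range W` is an `ω`-cover
  obtain ⟨n, hFn, hnε⟩ := ((frequently_subset_of_range_mem_omegaCovers hWΩ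
    (hF.insert (Classical.arbitrary X)) (insert_nonempty _ _)).and_eventually
    ((tendsto_order.1 tendsto_one_div_add_atTop_nhds_zero_nat).2 ε hε)).exists
  exact ⟨g n, mem_range_self n, fun x hx => (hWg n (hFn (mem_insert_of_mem _ hx))).trans hnε⟩

lemma OmegaHurewicz.groupable_omegaPt_zeroCp [T1Space X] [Infinite X] (hX : OmegaHurewicz X)
    {A : Set (Cp X)} (hA : A ∈ OmegaPt (Cp X) (zeroCp X)) (hc : A.Countable) :
    Groupable (OmegaPt (Cp X) (zeroCp X)) A := by
  obtain ⟨g₀, hg₀, -⟩ := zeroCp_mem_closure_iff.1 hA.1 ∅ finite_empty 1 one_pos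
  obtain ⟨e, rfl⟩ := hc.exists_eq_range ⟨g₀, hg₀⟩
  obtain ⟨ℋ, hℋ, hev⟩ := hX _ fun n => punctured_image_sublevel_mem_omegaCovers
    (diff_mem_omegaPt hA ((finite_Iic n).image e)).1 (Nat.one_div_pos_of_nat (n := n))
  have hdec : ∀ j, ∀ V ∈ ℋ j, ∃ g ∈ range e \ e '' Iic j,
      ∀ x ∈ V, |g.1 x| < 1 / ((j : ℝ) + 1) := fun j V hV => by
    obtain ⟨n, hjn, hVn⟩ := (hℋ j).2 V hV
    obtain ⟨_, ⟨g, ⟨hge, hgn⟩, rfl⟩, hVg⟩ := exists_superset_of_mem_punctured hVn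
    exact ⟨g, ⟨hge, fun h => hgn (image_mono (Iic_subset_Iic.2 hjn) h)⟩,
      fun x hx => (hVg hx).trans_le (Nat.one_div_le_one_div hjn)⟩
  have : Nonempty (Cp X) := ⟨zeroCp X⟩
  choose! d hd hdV using hdec
  refine groupable_of_blocks
    (P := fun (p : {p : Set X × ℝ // p.1.Finite ∧ 0 < p.2}) g => ∀ x ∈ p.1.1, |g.1 x| < p.1.2) e
    (fun S hS hw => ⟨zeroCp_mem_closure_iff.2 fun F hF ε hε => hw ⟨(F, ε), hF, hε⟩,
      fun h => hA.2 (hS h)⟩) (ℬ := fun j => d j '' ℋ j) (fun j => (hℋ j).1.image _)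
    (fun j => by rintro _ ⟨V, hV, rfl⟩; exact (hd j V hV).1)
    (fun j i hij => by rintro ⟨V, hV, hVi⟩; exact (hd j V hV).2 ⟨i, hij, hVi.symm⟩) ?_
  rintro ⟨⟨F, ε⟩, hF, hε⟩
  filter_upwards [hev _ (hF.insert (Classical.arbitrary X)) (insert_nonempty _ _),
    (tendsto_order.1 tendsto_one_div_add_atTop_nhds_zero_nat).2 ε hε] with j ⟨V, hV, hFV⟩ hjε
  exact ⟨d j V, mem_image_of_mem _ hV,
    fun x hx => (hdV j V hV x (hFV (mem_insert_of_mem _ hx))).trans hjε⟩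

end Cp

theorem statement13 {X : Type u} [TopologicalSpace X] [T2Space X] [CompletelyRegularSpace X]
    [Infinite X] :
    List.TFAE
      [GerlitsNagyProp (PFin X),
       Sone (OmegaCovers X) (groupables (OmegaCovers X)),
       ∀ n : ℕ, 1 ≤ n → GerlitsNagyProp (Fin n → X),
       Sone (OmegaPt (Cp X) (zeroCp X)) (groupables (OmegaPt (Cp X) (zeroCp X))),
       Reznichenko (Cp X) ∧ CountableStrongFanTightness (Cp X)] := by
  have of_hub (hR : OmegaRothberger X) (hH : OmegaHurewicz X) :
      Sone (OmegaCovers X) (groupables (OmegaCovers X)) ∧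
      (∀ n : ℕ, 1 ≤ n → GerlitsNagyProp (Fin n → X)) ∧
      Sone (OmegaPt (Cp X) (zeroCp X)) (groupables (OmegaPt (Cp X) (zeroCp X))) := by
    refine ⟨hR.to_groupables fun C hC hc => hH.groupable hC hc, fun n hn => ?_,
      hR.sone_omegaPt_zeroCp.to_groupables fun A hA hc => hH.groupable_omegaPt_zeroCp hA hc⟩
    have : Nonempty (Fin n) := ⟨⟨0, hn⟩⟩
    exact ⟨hH.hurewiczProp_pi, hR.pi.rothbergerProp⟩
  tfae_have 1 → 2 := fun h => (of_hub (.of_rothbergerProp_pfin h.2) (.of_hurewiczProp_pfin h.1)).1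
  tfae_have 2 → 3 := fun h => (of_hub (h.mono groupables_subset) (.of_sone_groupables h)).2.1
  tfae_have 3 → 1 := fun h => gerlitsNagyProp_pfin fun m => h (m + 1) m.succ_pos
  tfae_have 2 → 4 := fun h => (of_hub (h.mono groupables_subset) (.of_sone_groupables h)).2.2
  tfae_have 4 → 2 := fun h => (of_hub (.of_sone_omegaPt_zeroCp (h.mono groupables_subset))
    (.of_sone_omegaPt_zeroCp_groupables h)).1
  tfae_have 4 → 5 := fun h => reznichenko_and_countableStrongFanTightness fun y =>
    Cp.translate_zeroCp y ▸ h.omegaPt_groupables_homeomorph (Cp.translate y)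
  tfae_have 5 → 4 := fun h => (h.2 (zeroCp X)).to_groupables (h.1 (zeroCp X))
  tfae_finish
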